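/- Let σ > 0, N = 2/(γ−1) with γ > 1, h_min > 0, and let h : T^d → R satisfy h + σ ≥ h_min and ‖h‖_{L^∞} < ∞. Define the quantity J = (1/(2N)) ∫_{T^d} ((h+σ)² − σ²) ((h+σ)^N − σ^N) dx. Then there exists c₁ = c₁(γ, ‖h‖_{L^∞}, h_min) > 0 such that J ≥ c₁ ∫_{T^d} |(h+σ)^N − σ^N|² dx. -/

import Mathlib

open MeasureTheory

/-- The fundamental domain `[0,1]^d` of the torus `𝕋^d`. -/
noncomputable def torusBox (d : ℕ) : Set (EuclideanSpace ℝ (Fin d)) :=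
  WithLp.ofLp ⁻¹' (Set.univ.pi fun _ => Set.Icc (0:ℝ) 1)

/-!
The pointwise inequality is the whole argument. Write `a = h + σ ∈ [m, B]` with `m > 0`.
On `[m, B]` the map `a ↦ a ^ N` is increasing and Lipschitz with some constant `K`, so
`(a ^ N - σ ^ N) ^ 2 ≤ K (a - σ) (a ^ N - σ ^ N)`, and the product on the right is
nonnegative. Since `a ^ 2 - σ ^ 2 = (a + σ)(a - σ)` with `a + σ ≥ σ`, this gives
`σ (a ^ N - σ ^ N) ^ 2 ≤ K (a ^ 2 - σ ^ 2)(a ^ N - σ ^ N)`, and `c₁ = σ / (2 N K)` works.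
Integrating over the box is harmless since all integrands are bounded.
-/

open Set NNReal

theorem isCompact_torusBox (d : ℕ) : IsCompact (torusBox d) :=
  (PiLp.homeomorph 2 fun _ : Fin d => ℝ).isCompact_preimage.2
    (isCompact_univ_pi fun _ => isCompact_Icc)

instance (d : ℕ) : IsFiniteMeasure (volume.restrict (torusBox d)) :=
  isFiniteMeasure_restrict.2 (isCompact_torusBox d).measure_lt_top.ne

theorem Continuous.integrable_comp_of_mapsTo_isCompact {α X E : Type*} [MeasurableSpace α]
    {μ : Measure α} [IsFiniteMeasure μ] [TopologicalSpace X] [NormedAddCommGroup E]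
    {F : X → E} (hF : Continuous F) {f : α → X} (hf : AEStronglyMeasurable f μ)
    {S : Set X} (hS : IsCompact S) (hfS : ∀ x, f x ∈ S) :
    Integrable (fun x => F (f x)) μ := by
  obtain ⟨C, hC⟩ := hS.exists_bound_of_continuousOn hF.continuousOn
  exact .of_bound (hF.comp_aestronglyMeasurable hf) C (ae_of_all _ fun x => hC _ (hfS x))

theorem MonotoneOn.mul_sub_nonneg {f : ℝ → ℝ} {s : Set ℝ} (hf : MonotoneOn f s) {a b : ℝ}
    (ha : a ∈ s) (hb : b ∈ s) : 0 ≤ (a - b) * (f a - f b) := by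
  rcases le_total a b with hab | hab
  · exact mul_nonneg_of_nonpos_of_nonpos (sub_nonpos.2 hab) (sub_nonpos.2 (hf ha hb hab))
  · exact mul_nonneg (sub_nonneg.2 hab) (sub_nonneg.2 (hf hb ha hab))

theorem MonotoneOn.sq_sub_le_of_lipschitzOnWith {f : ℝ → ℝ} {s : Set ℝ} {K : ℝ≥0}
    (hmono : MonotoneOn f s) (hf : LipschitzOnWith K f s) {a b : ℝ} (ha : a ∈ s) (hb : b ∈ s) :
    (f a - f b) ^ 2 ≤ K * ((a - b) * (f a - f b)) := by
  have hlip : |f a - f b| ≤ K * |a - b| := by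
    simpa only [Real.dist_eq] using hf.dist_le_mul a ha b hb
  calc (f a - f b) ^ 2 = |f a - f b| * |f a - f b| := by rw [abs_mul_abs_self, sq]
    _ ≤ K * |a - b| * |f a - f b| := by gcongr
    _ = K * ((a - b) * (f a - f b)) := by
      rw [mul_assoc, ← abs_mul, abs_of_nonneg (hmono.mul_sub_nonneg ha hb)]

theorem exists_pos_lipschitzOnWith_rpow {m : ℝ} (hm : 0 < m) (B N : ℝ) :
    ∃ K : ℝ≥0, 0 < K ∧ LipschitzOnWith K (fun x : ℝ => x ^ N) (Icc m B) := by
  have hC1 : ContDiffOn ℝ 1 (fun x : ℝ => x ^ N) (Icc m B) := fun x hx =>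
    (Real.contDiffAt_rpow_const_of_ne (hm.trans_le hx.1).ne').contDiffWithinAt
  obtain ⟨K, hK⟩ := hC1.exists_lipschitzOnWith one_ne_zero (convex_Icc m B) isCompact_Icc
  exact ⟨K + 1, by positivity, hK.weaken (le_add_of_nonneg_right zero_le_one)⟩

theorem mul_sq_rpow_sub_le {m B N σ a : ℝ} {K : ℝ≥0} (hm : 0 ≤ m) (hN : 0 ≤ N)
    (hK : LipschitzOnWith K (fun x : ℝ => x ^ N) (Icc m B)) (ha : a ∈ Icc m B)
    (hσ : σ ∈ Icc m B) :
    σ * (a ^ N - σ ^ N) ^ 2 ≤ K * ((a ^ 2 - σ ^ 2) * (a ^ N - σ ^ N)) := by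
  have hmono : MonotoneOn (fun x : ℝ => x ^ N) (Icc m B) :=
    (Real.monotoneOn_rpow_Ici_of_exponent_nonneg hN).mono fun x hx => hm.trans hx.1
  have hsq := hmono.sq_sub_le_of_lipschitzOnWith hK ha hσ
  have hprod := hmono.mul_sub_nonneg ha hσ
  have hσ0 : 0 ≤ σ := hm.trans hσ.1
  have ha0 : 0 ≤ a := hm.trans ha.1
  calc σ * (a ^ N - σ ^ N) ^ 2 ≤ σ * (K * ((a - σ) * (a ^ N - σ ^ N))) := by gcongr
    _ ≤ (a + σ) * (K * ((a - σ) * (a ^ N - σ ^ N))) := by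
      gcongr
      linarith
    _ = K * ((a ^ 2 - σ ^ 2) * (a ^ N - σ ^ N)) := by ring

theorem coercivity_pressure_term_general (d : ℕ) (σ γ N hmin M : ℝ)
    (hσ : 0 < σ) (hγ : 1 < γ) (hN : N = 2 / (γ - 1)) (hmin_pos : 0 < hmin) :
    ∃ c₁ : ℝ, 0 < c₁ ∧
      ∀ h : EuclideanSpace ℝ (Fin d) → ℝ, Measurable h →
        (∀ x, hmin ≤ h x + σ) → (∀ x, |h x| ≤ M) →
        c₁ * ∫ x in torusBox d, ((h x + σ) ^ N - σ ^ N) ^ 2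
          ≤ (1 / (2 * N)) *
              ∫ x in torusBox d, ((h x + σ) ^ 2 - σ ^ 2) * ((h x + σ) ^ N - σ ^ N) := by
  have hNpos : 0 < N := hN ▸ div_pos two_pos (sub_pos.2 hγ)
  have hm : 0 < min hmin σ := lt_min hmin_pos hσ
  obtain ⟨K, hKpos, hK⟩ := exists_pos_lipschitzOnWith_rpow hm (M + σ) N
  refine ⟨σ / (2 * N * K), by positivity, fun h hmeas hlow habs => ?_⟩
  have hrange : ∀ x, h x + σ ∈ Icc (min hmin σ) (M + σ) := fun x =>
    ⟨(min_le_left _ _).trans (hlow x), by linarith [(abs_le.1 (habs x)).2]⟩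
  have hσmem : σ ∈ Icc (min hmin σ) (M + σ) :=
    ⟨min_le_right _ _, by linarith [(abs_nonneg _).trans (habs 0)]⟩
  have hpt : ∀ x, σ / (2 * N * K) * ((h x + σ) ^ N - σ ^ N) ^ 2
      ≤ 1 / (2 * N) * (((h x + σ) ^ 2 - σ ^ 2) * ((h x + σ) ^ N - σ ^ N)) := fun x => by
    have key := mul_sq_rpow_sub_le hm.le hNpos.le hK (hrange x) hσmem
    calc σ / (2 * N * K) * ((h x + σ) ^ N - σ ^ N) ^ 2
        = σ * ((h x + σ) ^ N - σ ^ N) ^ 2 / (2 * N * K) := by ring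
      _ ≤ K * (((h x + σ) ^ 2 - σ ^ 2) * ((h x + σ) ^ N - σ ^ N)) / (2 * N * K) := by gcongr
      _ = 1 / (2 * N) * (((h x + σ) ^ 2 - σ ^ 2) * ((h x + σ) ^ N - σ ^ N)) := by
        field_simp
  have hpow : Continuous fun a : ℝ => a ^ N := Real.continuous_rpow_const hNpos.le
  have hint {F : ℝ → ℝ} (hF : Continuous F) :
      Integrable (fun x => F (h x + σ)) (volume.restrict (torusBox d)) :=
    hF.integrable_comp_of_mapsTo_isCompact (hmeas.add_const σ).aestronglyMeasurable
      isCompact_Icc hrange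
  rw [← integral_const_mul, ← integral_const_mul]
  refine integral_mono (hint (F := fun a => σ / (2 * N * K) * (a ^ N - σ ^ N) ^ 2) ?_)
    (hint (F := fun a => 1 / (2 * N) * ((a ^ 2 - σ ^ 2) * (a ^ N - σ ^ N))) ?_) hpt <;> fun_prop

/-- Let `σ > 0`, `N = 2/(γ−1)` with `γ > 1`, `h_min > 0`.  There exists
`c₁ = c₁(γ, ‖h‖_{L^∞}, h_min) > 0` such that for every measurable `h` with
`h + σ ≥ h_min` and `|h| ≤ M`, the quantity
`J = (1/(2N)) ∫ ((h+σ)² − σ²)((h+σ)^N − σ^N) dx` satisfies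
`J ≥ c₁ ∫ |(h+σ)^N − σ^N|² dx`. -/
theorem coercivity_pressure_term (d : ℕ) (σ γ N hmin M : ℝ)
    (hσ : 0 < σ) (hγ : 1 < γ) (hN : N = 2 / (γ - 1)) (hmin_pos : 0 < hmin)
    (hM : 0 ≤ M) :
    ∃ c₁ : ℝ, 0 < c₁ ∧
      ∀ h : EuclideanSpace ℝ (Fin d) → ℝ, Measurable h →
        (∀ x, hmin ≤ h x + σ) → (∀ x, |h x| ≤ M) →
        c₁ * ∫ x in torusBox d, ((h x + σ) ^ N - σ ^ N) ^ 2
          ≤ (1 / (2 * N)) *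
              ∫ x in torusBox d, ((h x + σ) ^ 2 - σ ^ 2) * ((h x + σ) ^ N - σ ^ N) :=
  coercivity_pressure_term_general d σ γ N hmin M hσ hγ hN hmin_pos
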